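/- Let F be a field and f, g ∈ ℍ[F] with normSq f ≠ 0 (so f is not a zero divisor). If f ≃ −g, i.e. there exists h with normSq h ≠ 0 and h * f = −g * h, then f * f + (2 · re g) • f + (normSq g) • 1 = 0 and g * g + (2 · re f) • g + (normSq f) • 1 = 0 (equivalently, the elements λ_L = (2 re g)•1 + f + (normSq g)•f⁻¹ and λ_R = (2 re f)•1 + g + (normSq f)•g⁻¹ vanish). -/

import Mathlib

open Quaternion

lemma re_mul_comm' {F : Type*} [Field F] (a b : ℍ[F]) : (a * b).re = (b * a).re := by
  simp [Quaternion.re_mul]; ring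

lemma quat_char {F : Type*} [Field F] (q : ℍ[F]) :
    q * q - (2 * q.re) • q + Quaternion.normSq q • (1 : ℍ[F]) = 0 := by
  ext <;>
    simp [Quaternion.re_mul, Quaternion.imI_mul, Quaternion.imJ_mul, Quaternion.imK_mul,
      Quaternion.normSq_def', smul_eq_mul] <;> ring

theorem lambdaL_lambdaR_vanish_of_equiv_neg (F : Type*) [Field F] (f g : ℍ[F])
    (hf : Quaternion.normSq f ≠ 0)
    (hequiv : ∃ h : ℍ[F], Quaternion.normSq h ≠ 0 ∧ h * f = -g * h) :
    f * f + (2 * g.re) • f + Quaternion.normSq g • (1 : ℍ[F]) = 0 ∧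
    g * g + (2 * f.re) • g + Quaternion.normSq f • (1 : ℍ[F]) = 0 := by
  obtain ⟨h, hh, heq⟩ := hequiv
  have hns : Quaternion.normSq g = Quaternion.normSq f := by
    have h2 := congrArg Quaternion.normSq heq
    rw [map_mul, map_mul, Quaternion.normSq_neg, mul_comm (Quaternion.normSq g)] at h2
    exact (mul_left_cancel₀ hh h2).symm
  have hre : g.re = - f.re := by
    have h1 : (star h * (h * f)).re = (star h * (-g * h)).re := by rw [heq]
    rw [← mul_assoc, Quaternion.star_mul_self, re_mul_comm' (star h) (-g * h),
      mul_assoc, Quaternion.self_mul_star] at h1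
    simp only [Quaternion.re_mul, Quaternion.re_coe, Quaternion.imI_coe, Quaternion.imJ_coe,
      Quaternion.imK_coe, Quaternion.re_neg, Quaternion.imI_neg, Quaternion.imJ_neg,
      Quaternion.imK_neg, mul_zero, zero_mul, sub_zero, neg_mul, neg_zero] at h1
    have h3 := mul_left_cancel₀ hh (h1.trans
      (by ring : -(g.re * Quaternion.normSq h) = Quaternion.normSq h * (-g.re)))
    rw [h3, neg_neg]
  have hre' : f.re = - g.re := by rw [hre]; ring
  constructor
  · rw [hns, hre, mul_neg, neg_smul, ← sub_eq_add_neg]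
    exact quat_char f
  · rw [← hns, hre', mul_neg, neg_smul, ← sub_eq_add_neg]
    exact quat_char g
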